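/- arXiv:2202.06868 — 3 statements merged into one kernel-verified Lean document; each statement's English description precedes it below -/
import Mathlib

section
/- If a stream s : ℕ → ℕ satisfies s(0) = 0 and, for all k, s(2k+1) = s(k) + 1 and s(2k+2) = s(k) + 1 (the equation s = 0 : ((s [+] repeat 1) ⋈ (s [+] repeat 1))), then s(n) = ⌊log₂(n+1)⌋ for all n. -/
/-- Index `n` plays the role of the node `n + 1` of the binary tree, whose children are
`2 * n + 2` and `2 * n + 3`; hence the shifted recurrence determines the whole stream. -/
theorem eq_of_two_mul_add_one_of_two_mul_add_two {α : Type*} {s t : ℕ → α} (f g : α → α)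
    (h0 : s 0 = t 0)
    (hs1 : ∀ k, s (2 * k + 1) = f (s k)) (hs2 : ∀ k, s (2 * k + 2) = g (s k))
    (ht1 : ∀ k, t (2 * k + 1) = f (t k)) (ht2 : ∀ k, t (2 * k + 2) = g (t k)) :
    s = t := by
  funext n
  induction n using Nat.strong_induction_on with
  | _ n ih =>
    obtain rfl | ⟨k, rfl | rfl⟩ : n = 0 ∨ ∃ k, n = 2 * k + 1 ∨ n = 2 * k + 2 := by
      rcases Nat.even_or_odd' n with ⟨k, rfl | rfl⟩
      · rcases k with _ | k
        · exact .inl rfl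
        · exact .inr ⟨k, .inr (by ring)⟩
      · exact .inr ⟨k, .inl rfl⟩
    · exact h0
    · rw [hs1, ht1, ih k (by omega)]
    · rw [hs2, ht2, ih k (by omega)]

theorem Nat.log_two_of_le_two_mul_add_three {k m : ℕ} (hm₁ : 2 * k + 2 ≤ m) (hm₂ : m ≤ 2 * k + 3) :
    Nat.log 2 m = Nat.log 2 (k + 1) + 1 := by
  rw [Nat.log_of_one_lt_of_le Nat.one_lt_two (by omega), show m / 2 = k + 1 by omega]

theorem stmt_6 (s : ℕ → ℕ) (h0 : s 0 = 0)
    (h1 : ∀ k, s (2 * k + 1) = s k + 1)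
    (h2 : ∀ k, s (2 * k + 2) = s k + 1) :
    ∀ n, s n = Nat.log 2 (n + 1) :=
  congrFun <| eq_of_two_mul_add_one_of_two_mul_add_two (t := fun n ↦ Nat.log 2 (n + 1))
    (· + 1) (· + 1) (by simpa using h0) h1 h2
    (fun _ ↦ Nat.log_two_of_le_two_mul_add_three (by omega) (by omega))
    (fun _ ↦ Nat.log_two_of_le_two_mul_add_three (by omega) (by omega))
end

section
/- If a stream s : ℕ → ℕ satisfies s(0)=2, s(1)=4, s(2)=8, and for all i, s(2i+3) = s(i+2) * s(i) and s(2i+4) = s(i+2) * s(i+1) (the equation s = 2:4:8:((tail(tail s) [*] s) ⋈ (tail(tail s) [*] tail s))), then s(i) = 2^(i+1) for all i. -/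
/-! The defining equations express every entry from index 3 on through strictly earlier entries,
so by strong induction they have at most one solution; `i ↦ 2 ^ (i + 1)` is one. -/

section StreamRecurrence

variable {M : Type*} [Mul M]

theorem eq_of_stream_recurrence {s t : ℕ → M}
    (h0 : s 0 = t 0) (h1 : s 1 = t 1) (h2 : s 2 = t 2)
    (hs3 : ∀ i, s (2 * i + 3) = s (i + 2) * s i)
    (hs4 : ∀ i, s (2 * i + 4) = s (i + 2) * s (i + 1))
    (ht3 : ∀ i, t (2 * i + 3) = t (i + 2) * t i)
    (ht4 : ∀ i, t (2 * i + 4) = t (i + 2) * t (i + 1)) :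
    s = t := by
  funext n
  induction n using Nat.strong_induction_on with
  | _ n ih =>
    match n with
    | 0 => exact h0
    | 1 => exact h1
    | 2 => exact h2
    | n + 3 =>
      obtain ⟨i, rfl | rfl⟩ : ∃ i, n = 2 * i ∨ n = 2 * i + 1 := ⟨n / 2, by omega⟩
      · rw [hs3, ht3, ih (i + 2) (by omega), ih i (by omega)]
      · rw [show 2 * i + 1 + 3 = 2 * i + 4 by omega, hs4, ht4,
          ih (i + 2) (by omega), ih (i + 1) (by omega)]

end StreamRecurrence

theorem stmt_8 (s : ℕ → ℕ) (h0 : s 0 = 2) (h1 : s 1 = 4) (h2 : s 2 = 8)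
    (h3 : ∀ i, s (2 * i + 3) = s (i + 2) * s i)
    (h4 : ∀ i, s (2 * i + 4) = s (i + 2) * s (i + 1)) :
    ∀ i, s i = 2 ^ (i + 1) := by
  have hpow : s = fun i => 2 ^ (i + 1) :=
    eq_of_stream_recurrence h0 h1 h2 h3 h4
      (fun i => by rw [← pow_add]; ring_nf) (fun i => by rw [← pow_add]; ring_nf)
  exact congrFun hpow
end

section
/- If a stream s : ℕ → ℕ satisfies, for all j and i: s(4j) = s(j+1), s(4j+2) = s(j), s(1) = 0, and s(2i+3) = s(i) (the index equations induced by s = (tail s ⋈ s) ⋈ (0 : s)), then s(i) = 0 for all i. In particular this system of index equations has a unique solution, the zero stream. -/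
/-! Each equation identifies an index `i ≥ 2` with a strictly smaller one (for `s (4 * j) = s (j + 1)`
this needs `j ≥ 1`), so by strong induction every value equals `s 0 = s 1 = 0`. -/

theorem exists_lt_eq_of_index_equations (s : ℕ → ℕ)
    (h0 : ∀ j, s (4 * j) = s (j + 1))
    (h1 : ∀ j, s (4 * j + 2) = s j)
    (h3 : ∀ i, s (2 * i + 3) = s i) {i : ℕ} (hi : 2 ≤ i) :
    ∃ k < i, s i = s k := by
  obtain ⟨j, rfl | rfl | rfl | rfl⟩ :
      ∃ j, i = 4 * (j + 1) ∨ i = 2 * (2 * j + 1) + 3 ∨ i = 4 * j + 2 ∨ i = 2 * (2 * j) + 3 :=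
    ⟨(i - 2) / 4, by omega⟩
  · exact ⟨j + 2, by omega, h0 (j + 1)⟩
  · exact ⟨2 * j + 1, by omega, h3 _⟩
  · exact ⟨j, by omega, h1 j⟩
  · exact ⟨2 * j, by omega, h3 _⟩

theorem stmt_14 (s : ℕ → ℕ)
    (h0 : ∀ j, s (4 * j) = s (j + 1))
    (h1 : ∀ j, s (4 * j + 2) = s j)
    (h2 : s 1 = 0)
    (h3 : ∀ i, s (2 * i + 3) = s i) :
    ∀ i, s i = 0 := by
  intro i
  induction i using Nat.strong_induction_on with
  | _ i ih =>
    match i, ih with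
    | 0, _ => simpa [h2] using h0 0
    | 1, _ => exact h2
    | i + 2, ih =>
      obtain ⟨k, hk, hsk⟩ := exists_lt_eq_of_index_equations s h0 h1 h3 (Nat.le_add_left 2 i)
      exact hsk.trans (ih k hk)
end
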